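/- arXiv:1701.04165 — 5 statements merged into one kernel-verified Lean document; each statement's English description precedes it below -/
import Mathlib

section
/- For every nonnegative integer m, there exists a binary [6m+2, 2, 4m+1] LCD code; hence LCD[6m+2,2] = ⌊2(6m+2)/3⌋. -/
open Matrix

/-- The dual code of a binary linear code `C ⊆ GF(2)^n` under the standard bilinear form. -/
def dualCode {n : ℕ} (C : Submodule (ZMod 2) (Fin n → ZMod 2)) :
    Submodule (ZMod 2) (Fin n → ZMod 2) where
  carrier := {v | ∀ c ∈ C, v ⬝ᵥ c = 0}
  add_mem' := by
    intro a b ha hb c hc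
    simp [add_dotProduct, ha c hc, hb c hc]
  zero_mem' := by
    intro c hc
    simp
  smul_mem' := by
    intro r a ha c hc
    simp [smul_dotProduct, ha c hc]

/-- A linear code is LCD if it intersects its dual trivially. -/
def isLCD {n : ℕ} (C : Submodule (ZMod 2) (Fin n → ZMod 2)) : Prop :=
  C ⊓ dualCode C = ⊥

/-- `C` has minimum distance `d`: every nonzero codeword has Hamming weight at least `d`,
and some nonzero codeword has Hamming weight exactly `d`. -/
def hasMinDist {n : ℕ} (C : Submodule (ZMod 2) (Fin n → ZMod 2)) (d : ℕ) : Prop :=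
  (∀ v ∈ C, v ≠ 0 → d ≤ hammingNorm v) ∧ ∃ v ∈ C, v ≠ 0 ∧ hammingNorm v = d

/-- `LCDmax n k` is the largest minimum distance among binary `[n,k]` LCD codes. -/
noncomputable def LCDmax (n k : ℕ) : ℕ :=
  sSup {d | ∃ C : Submodule (ZMod 2) (Fin n → ZMod 2),
    Module.finrank (ZMod 2) ↥C = k ∧ hasMinDist C d ∧ isLCD C}

/-! Identify a binary vector with its support. The rows `u`, `w` of the witness have supports of
size `4m+1` meeting in `2m` coordinates, so over `GF(2)` they are orthonormal for the dot product;
an orthonormal family spans an LCD code, because a codeword `∑ cᵢ vᵢ` orthogonal to every `vⱼ` has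
all `cⱼ = 0`. The nonzero codewords `u`, `w`, `u + w` have weights `4m+1`, `4m+1`, `4m+2`.
Conversely, any two-dimensional binary code has three nonzero words `x`, `y`, `x + y`, and each
coordinate lies in the support of at most two of them, so `3d ≤ 2n`: no `[6m+2, 2]` code beats
`d = 4m+1`. -/

open Finset
open scoped symmDiff

lemma ZMod.two_eq_zero_or_one (a : ZMod 2) : a = 0 ∨ a = 1 := by
  decide +revert

section BinaryVectors

variable {ι : Type*} [DecidableEq ι]

def binIndicator (s : Finset ι) : ι → ZMod 2 := fun i => if i ∈ s then 1 else 0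

lemma binIndicator_add (s t : Finset ι) :
    binIndicator s + binIndicator t = binIndicator (s ∆ t) := by
  funext i
  by_cases hs : i ∈ s <;> by_cases ht : i ∈ t <;> simp [binIndicator, mem_symmDiff, hs, ht]
  rfl

variable [Fintype ι]

lemma binIndicator_support (x : ι → ZMod 2) : binIndicator {i | x i ≠ 0} = x := by
  funext i
  simp only [binIndicator, mem_filter, mem_univ, true_and]
  rcases ZMod.two_eq_zero_or_one (x i) with h | h <;> simp [h]

lemma hammingNorm_binIndicator (s : Finset ι) : hammingNorm (binIndicator s) = #s := by
  simp [hammingNorm, binIndicator]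

lemma binIndicator_dotProduct (s t : Finset ι) :
    binIndicator s ⬝ᵥ binIndicator t = #(s ∩ t) := by
  simp [dotProduct, binIndicator, ← ite_and, ← mem_inter, inter_comm]

end BinaryVectors

lemma card_symmDiff_add_two_mul_card_inter {α : Type*} [DecidableEq α] (s t : Finset α) :
    #(s ∆ t) + 2 * #(s ∩ t) = #s + #t := by
  have := card_union_add_card_inter s t
  have := card_sdiff_of_subset (inter_subset_union : s ∩ t ⊆ s ∪ t)
  have := card_le_card (inter_subset_union : s ∩ t ⊆ s ∪ t)
  rw [symmDiff_eq_sup_sdiff_inf, sup_eq_union, inf_eq_inter]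
  omega

lemma hammingNorm_add_add_hammingNorm_le {ι : Type*} [Fintype ι] (x y : ι → ZMod 2) :
    hammingNorm x + hammingNorm y + hammingNorm (x + y) ≤ 2 * Fintype.card ι := by
  classical
  -- the left side is `2 * #(supp x ∪ supp y)`
  rw [← binIndicator_support x, ← binIndicator_support y, binIndicator_add,
    hammingNorm_binIndicator, hammingNorm_binIndicator, hammingNorm_binIndicator]
  set s : Finset ι := {i | x i ≠ 0}
  set t : Finset ι := {i | y i ≠ 0}
  have hsymm := card_symmDiff_add_two_mul_card_inter s t
  have hunion := card_union_add_card_inter s t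
  have hle := card_le_univ (s ∪ t)
  omega

section OrthonormalFamily

variable {K ι κ : Type*} [CommRing K] [Fintype ι] [Fintype κ] [DecidableEq κ] {v : κ → ι → K}

lemma sum_smul_dotProduct_of_orthonormal (hv : ∀ i j, v i ⬝ᵥ v j = if i = j then 1 else 0)
    (c : κ → K) (j : κ) : (∑ i, c i • v i) ⬝ᵥ v j = c j := by
  simp [sum_dotProduct, smul_dotProduct, hv]

lemma linearIndependent_of_orthonormal (hv : ∀ i j, v i ⬝ᵥ v j = if i = j then 1 else 0) :
    LinearIndependent K v := by
  refine Fintype.linearIndependent_iff.2 fun c hc j => ?_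
  rw [← sum_smul_dotProduct_of_orthonormal hv c j, hc, zero_dotProduct]

end OrthonormalFamily

lemma isLCD_span_of_orthonormal {n : ℕ} {κ : Type*} [Fintype κ] [DecidableEq κ]
    {v : κ → Fin n → ZMod 2} (hv : ∀ i j, v i ⬝ᵥ v j = if i = j then 1 else 0) :
    isLCD (Submodule.span (ZMod 2) (Set.range v)) := by
  rw [isLCD, eq_bot_iff]
  rintro x ⟨hxC, hxD⟩
  obtain ⟨c, rfl⟩ := (Submodule.mem_span_range_iff_exists_fun _).1 hxC
  have hc : c = 0 := funext fun j => by
    rw [← sum_smul_dotProduct_of_orthonormal hv c j]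
    exact hxD _ (Submodule.subset_span (Set.mem_range_self j))
  simp [hc]

lemma orthonormal_pair {K ι : Type*} [CommRing K] [Fintype ι] {u w : ι → K}
    (hu : u ⬝ᵥ u = 1) (hw : w ⬝ᵥ w = 1) (huw : u ⬝ᵥ w = 0) :
    ∀ i j, ![u, w] i ⬝ᵥ ![u, w] j = if i = j then 1 else 0 := by
  intro i j
  fin_cases i <;> fin_cases j <;> simp [hu, hw, huw, dotProduct_comm w u]

lemma mem_span_pair_binary {ι : Type*} {u w x : ι → ZMod 2}
    (hx : x ∈ Submodule.span (ZMod 2) (Set.range ![u, w])) :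
    x = 0 ∨ x = u ∨ x = w ∨ x = u + w := by
  obtain ⟨c, rfl⟩ := (Submodule.mem_span_range_iff_exists_fun _).1 hx
  simp only [Fin.sum_univ_two, Matrix.cons_val_zero, Matrix.cons_val_one]
  rcases ZMod.two_eq_zero_or_one (c 0) with h0 | h0 <;>
    rcases ZMod.two_eq_zero_or_one (c 1) with h1 | h1 <;> simp [h0, h1]

lemma three_mul_le_two_mul_card_of_finrank_eq_two {ι : Type*} [Fintype ι]
    {C : Submodule (ZMod 2) (ι → ZMod 2)} (hC : Module.finrank (ZMod 2) C = 2) {d : ℕ}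
    (hd : ∀ v ∈ C, v ≠ 0 → d ≤ hammingNorm v) : 3 * d ≤ 2 * Fintype.card ι := by
  let B := Module.finBasisOfFinrankEq (ZMod 2) C hC
  set x : ι → ZMod 2 := (B 0).1
  set y : ι → ZMod 2 := (B 1).1
  have hxy : ∀ s t : ZMod 2, s • x + t • y = 0 → s = 0 ∧ t = 0 := by
    refine LinearIndependent.pair_iff.1 ?_
    convert B.linearIndependent.map' C.subtype C.ker_subtype using 1
    ext i : 1
    fin_cases i <;> rfl
  have hx : x ≠ 0 := fun h => by simpa using hxy 1 0 (by simp [h])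
  have hy : y ≠ 0 := fun h => by simpa using hxy 0 1 (by simp [h])
  have hxy' : x + y ≠ 0 := fun h => by simpa using hxy 1 1 (by simpa using h)
  have hdx := hd x (B 0).2 hx
  have hdy := hd y (B 1).2 hy
  have hdxy := hd (x + y) (C.add_mem (B 0).2 (B 1).2) hxy'
  have hsum := hammingNorm_add_add_hammingNorm_le x y
  omega

section Witness

variable (m : ℕ)

-- `binIndicator (witnessLeft m)` and `binIndicator (witnessRight m)` are the rows
-- `1^{2m+1} 1^{2m} 0^{2m+1}` and `0^{2m+1} 1^{2m} 1^{2m+1}`.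
def witnessLeft : Finset (Fin (6 * m + 2)) := Iio ⟨4 * m + 1, by omega⟩

def witnessRight : Finset (Fin (6 * m + 2)) := Ici ⟨2 * m + 1, by omega⟩

def witnessCode : Submodule (ZMod 2) (Fin (6 * m + 2) → ZMod 2) :=
  Submodule.span (ZMod 2)
    (Set.range ![binIndicator (witnessLeft m), binIndicator (witnessRight m)])

lemma card_witnessLeft : #(witnessLeft m) = 4 * m + 1 := Fin.card_Iio _

lemma card_witnessRight : #(witnessRight m) = 4 * m + 1 := by
  rw [witnessRight, Fin.card_Ici, Fin.val_mk]
  omega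

lemma card_witnessLeft_inter_witnessRight : #(witnessLeft m ∩ witnessRight m) = 2 * m := by
  have : witnessLeft m ∩ witnessRight m = Ico ⟨2 * m + 1, by omega⟩ ⟨4 * m + 1, by omega⟩ := by
    ext
    simp [witnessLeft, witnessRight, and_comm]
  rw [this, Fin.card_Ico, Fin.val_mk, Fin.val_mk]
  omega

lemma card_witnessLeft_symmDiff_witnessRight :
    #(witnessLeft m ∆ witnessRight m) = 4 * m + 2 := by
  have := card_symmDiff_add_two_mul_card_inter (witnessLeft m) (witnessRight m)
  rw [card_witnessLeft, card_witnessRight, card_witnessLeft_inter_witnessRight] at this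
  omega

lemma witness_orthonormal :
    ∀ i j, ![binIndicator (witnessLeft m), binIndicator (witnessRight m)] i ⬝ᵥ
      ![binIndicator (witnessLeft m), binIndicator (witnessRight m)] j =
        if i = j then 1 else 0 := by
  have h2 : (2 : ZMod 2) = 0 := rfl
  have h4 : (4 : ZMod 2) = 0 := rfl
  refine orthonormal_pair ?_ ?_ ?_ <;>
    simp [binIndicator_dotProduct, card_witnessLeft, card_witnessRight,
      card_witnessLeft_inter_witnessRight, h2, h4]

lemma finrank_witnessCode : Module.finrank (ZMod 2) (witnessCode m) = 2 := by
  rw [witnessCode, finrank_span_eq_card (linearIndependent_of_orthonormal (witness_orthonormal m)),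
    Fintype.card_fin]

lemma isLCD_witnessCode : isLCD (witnessCode m) :=
  isLCD_span_of_orthonormal (witness_orthonormal m)

lemma hasMinDist_witnessCode : hasMinDist (witnessCode m) (4 * m + 1) := by
  have hL : hammingNorm (binIndicator (witnessLeft m)) = 4 * m + 1 := by
    rw [hammingNorm_binIndicator, card_witnessLeft]
  refine ⟨fun x hx hx0 => ?_, _, Submodule.subset_span (Set.mem_range_self 0), ?_, hL⟩
  · rcases mem_span_pair_binary hx with rfl | rfl | rfl | rfl
    · exact absurd rfl hx0
    · exact hL.ge
    · rw [hammingNorm_binIndicator, card_witnessRight]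
    · rw [binIndicator_add, hammingNorm_binIndicator, card_witnessLeft_symmDiff_witnessRight]
      omega
  · intro h
    rw [Matrix.cons_val_zero] at h
    rw [h, hammingNorm_zero] at hL
    omega

end Witness

lemma isGreatest_minDist_lcd_six_mul_add_two (m : ℕ) :
    IsGreatest {d | ∃ C : Submodule (ZMod 2) (Fin (6 * m + 2) → ZMod 2),
      Module.finrank (ZMod 2) ↥C = 2 ∧ hasMinDist C d ∧ isLCD C} (4 * m + 1) := by
  refine ⟨⟨witnessCode m, finrank_witnessCode m, hasMinDist_witnessCode m, isLCD_witnessCode m⟩,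
    ?_⟩
  rintro d ⟨C, hC, hd, -⟩
  have := three_mul_le_two_mul_card_of_finrank_eq_two hC hd.1
  rw [Fintype.card_fin] at this
  omega

/-- For every nonnegative integer `m` there is a binary `[6m+2, 2, 4m+1]` LCD code;
hence `LCD[6m+2, 2] = ⌊2(6m+2)/3⌋`. -/
theorem lcd_6m_add_two (m : ℕ) :
    (∃ C : Submodule (ZMod 2) (Fin (6 * m + 2) → ZMod 2),
      Module.finrank (ZMod 2) ↥C = 2 ∧ hasMinDist C (4 * m + 1) ∧ isLCD C) ∧
    LCDmax (6 * m + 2) 2 = 2 * (6 * m + 2) / 3 := by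
  have h := isGreatest_minDist_lcd_six_mul_add_two m
  refine ⟨h.1, ?_⟩
  rw [LCDmax, h.csSup_eq]
  omega
end

section
/- For every positive odd integer i, there exists a binary [3i, 2, 2i] LCD code; hence LCD[3i,2] = ⌊2(3i)/3⌋ for i odd. -/
/-!
A two-dimensional binary code consists of `0, u, w, u + w`, and every coordinate is nonzero in
at most two of `u, w, u + w`; so the three weights sum to at most `2n` and `3d ≤ 2n`.
For odd `i` the bound `2i` is attained by the span of `x = 1ⁱ1ⁱ0ⁱ` and `y = 0ⁱ1ⁱ1ⁱ`:
`x`, `y`, `x + y = 1ⁱ0ⁱ1ⁱ` all have weight `2i`, and the Gram matrix of `x, y` is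
`[[2i, i], [i, 2i]] ≡ [[0, 1], [1, 0]] (mod 2)`. Its invertibility makes `x, y` independent and
forces every vector of the span orthogonal to the span to vanish.
-/

open Matrix

section IndicatorVec

variable {ι : Type*} [DecidableEq ι]

def indicatorVec (s : Finset ι) : ι → ZMod 2 := fun j => if j ∈ s then 1 else 0

lemma indicatorVec_add_indicatorVec (s t : Finset ι) :
    indicatorVec s + indicatorVec t = indicatorVec (symmDiff s t) := by
  ext j
  simp only [indicatorVec, Pi.add_apply, Finset.mem_symmDiff]
  split_ifs <;> simp_all [CharTwo.add_self_eq_zero]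

variable [Fintype ι]

lemma hammingNorm_indicatorVec (s : Finset ι) : hammingNorm (indicatorVec s) = s.card := by
  unfold hammingNorm indicatorVec
  congr 1
  ext j
  simp

lemma indicatorVec_dotProduct_indicatorVec (s t : Finset ι) :
    indicatorVec s ⬝ᵥ indicatorVec t = ((s ∩ t).card : ZMod 2) := by
  rw [Finset.inter_comm]
  simp [dotProduct, indicatorVec]

end IndicatorVec

section BlockSet

variable {m : ℕ} (i : ℕ)

/-- The union of the blocks indexed by `S` when `Fin (m * i)` is cut into `m` consecutive blocks
of length `i`. -/
def blockSet (S : Finset (Fin m)) : Finset (Fin (m * i)) :=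
  (S ×ˢ Finset.univ).map finProdFinEquiv.toEmbedding

lemma mem_blockSet {S : Finset (Fin m)} {j : Fin (m * i)} :
    j ∈ blockSet i S ↔ (finProdFinEquiv.symm j).1 ∈ S := by
  simp [blockSet]

lemma card_blockSet (S : Finset (Fin m)) : (blockSet i S).card = S.card * i := by
  simp [blockSet]

lemma blockSet_inter (S T : Finset (Fin m)) :
    blockSet i (S ∩ T) = blockSet i S ∩ blockSet i T := by
  ext j
  simp [mem_blockSet]

lemma blockSet_symmDiff (S T : Finset (Fin m)) :
    blockSet i (symmDiff S T) = symmDiff (blockSet i S) (blockSet i T) := by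
  ext j
  simp [mem_blockSet, Finset.mem_symmDiff]

lemma indicatorVec_blockSet_dotProduct (S T : Finset (Fin m)) :
    indicatorVec (blockSet i S) ⬝ᵥ indicatorVec (blockSet i T) =
      (((S ∩ T).card * i : ℕ) : ZMod 2) := by
  rw [indicatorVec_dotProduct_indicatorVec, ← blockSet_inter, card_blockSet]

end BlockSet

section Gram

variable {ι R : Type*} [Fintype ι] [CommRing R] {x y : ι → R}

lemma smul_add_smul_dotProduct_of_gram (hxx : x ⬝ᵥ x = 0) (hyy : y ⬝ᵥ y = 0)
    (hxy : x ⬝ᵥ y = 1) (a b : R) :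
    (a • x + b • y) ⬝ᵥ x = b ∧ (a • x + b • y) ⬝ᵥ y = a := by
  simp [add_dotProduct, hxx, hyy, hxy, dotProduct_comm y x]

lemma linearIndependent_pair_of_gram (hxx : x ⬝ᵥ x = 0) (hyy : y ⬝ᵥ y = 0)
    (hxy : x ⬝ᵥ y = 1) :
    LinearIndependent R ![x, y] := by
  rw [LinearIndependent.pair_iff]
  intro a b h
  obtain ⟨hb, ha⟩ := smul_add_smul_dotProduct_of_gram hxx hyy hxy a b
  rw [h, zero_dotProduct] at ha hb
  exact ⟨ha.symm, hb.symm⟩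

lemma finrank_span_pair_of_gram [Nontrivial R] (hxx : x ⬝ᵥ x = 0) (hyy : y ⬝ᵥ y = 0)
    (hxy : x ⬝ᵥ y = 1) :
    Module.finrank R (Submodule.span R {x, y}) = 2 := by
  rw [← Matrix.range_cons_cons_empty x y ![],
    finrank_span_eq_card (linearIndependent_pair_of_gram hxx hyy hxy)]
  simp

end Gram

lemma isLCD_span_pair_of_gram {n : ℕ} {x y : Fin n → ZMod 2}
    (hxx : x ⬝ᵥ x = 0) (hyy : y ⬝ᵥ y = 0) (hxy : x ⬝ᵥ y = 1) :
    isLCD (Submodule.span (ZMod 2) {x, y}) := by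
  rw [isLCD, eq_bot_iff]
  rintro v ⟨hv, hv_dual⟩
  have hv_dual : ∀ c ∈ Submodule.span (ZMod 2) {x, y}, v ⬝ᵥ c = 0 := hv_dual
  obtain ⟨a, b, rfl⟩ := Submodule.mem_span_pair.mp hv
  obtain ⟨hb, ha⟩ := smul_add_smul_dotProduct_of_gram hxx hyy hxy a b
  rw [hv_dual x (Submodule.subset_span (by simp))] at hb
  rw [hv_dual y (Submodule.subset_span (by simp))] at ha
  simp [← ha, ← hb]

lemma mem_span_pair_zmod_two {M : Type*} [AddCommGroup M] [Module (ZMod 2) M] {x y v : M}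
    (hv : v ∈ Submodule.span (ZMod 2) {x, y}) : v = 0 ∨ v = x ∨ v = y ∨ v = x + y := by
  have h01 : ∀ c : ZMod 2, c = 0 ∨ c = 1 := by decide
  obtain ⟨a, b, rfl⟩ := Submodule.mem_span_pair.mp hv
  rcases h01 a with rfl | rfl <;> rcases h01 b with rfl | rfl <;> simp

lemma hasMinDist_span_pair {n d : ℕ} {x y : Fin n → ZMod 2} (hx0 : x ≠ 0)
    (hx : hammingNorm x = d) (hy : d ≤ hammingNorm y) (hxy : d ≤ hammingNorm (x + y)) :
    hasMinDist (Submodule.span (ZMod 2) {x, y}) d := by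
  refine ⟨fun v hv hv0 => ?_, x, Submodule.subset_span (by simp), hx0, hx⟩
  rcases mem_span_pair_zmod_two hv with rfl | rfl | rfl | rfl
  exacts [absurd rfl hv0, hx.ge, hy, hxy]

lemma hammingNorm_add_hammingNorm_add_hammingNorm_add_le {ι : Type*} [Fintype ι]
    (u w : ι → ZMod 2) :
    hammingNorm u + hammingNorm w + hammingNorm (u + w) ≤ 2 * Fintype.card ι := by
  have key : ∀ a b : ZMod 2,
      (if a ≠ 0 then 1 else 0) + (if b ≠ 0 then 1 else 0) + (if a + b ≠ 0 then 1 else 0) ≤ 2 := by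
    decide
  simp only [hammingNorm, Finset.card_filter, ← Finset.sum_add_distrib]
  calc _ ≤ ∑ _j : ι, 2 := Finset.sum_le_sum fun j _ => key (u j) (w j)
    _ = 2 * Fintype.card ι := by simp [mul_comm]

lemma three_mul_le_two_mul_of_finrank_eq_two {n d : ℕ}
    {C : Submodule (ZMod 2) (Fin n → ZMod 2)}
    (hC : Module.finrank (ZMod 2) C = 2) (hd : hasMinDist C d) : 3 * d ≤ 2 * n := by
  let b := Module.finBasisOfFinrankEq (ZMod 2) C hC
  have hsum : b 0 + b 1 ≠ 0 := by
    intro h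
    exact one_ne_zero <|
      Fintype.linearIndependent_iff.mp b.linearIndependent (fun _ => 1) (by simpa using h) 0
  have h0 := hd.1 _ (b 0).2 (Submodule.coe_eq_zero.not.mpr (b.ne_zero 0))
  have h1 := hd.1 _ (b 1).2 (Submodule.coe_eq_zero.not.mpr (b.ne_zero 1))
  have h01 := hd.1 _ (b 0 + b 1).2 (Submodule.coe_eq_zero.not.mpr hsum)
  have := hammingNorm_add_hammingNorm_add_hammingNorm_add_le (b 0 : Fin n → ZMod 2) (b 1)
  simp only [Fintype.card_fin, Submodule.coe_add] at this h01
  omega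

lemma LCDmax_eq_of_exists_of_forall_le {n k d : ℕ}
    (hC : ∃ C : Submodule (ZMod 2) (Fin n → ZMod 2),
      Module.finrank (ZMod 2) C = k ∧ hasMinDist C d ∧ isLCD C)
    (hle : ∀ (C : Submodule (ZMod 2) (Fin n → ZMod 2)) (d' : ℕ),
      Module.finrank (ZMod 2) C = k → hasMinDist C d' → isLCD C → d' ≤ d) :
    LCDmax n k = d :=
  IsGreatest.csSup_eq ⟨hC, by rintro d' ⟨C, hk, hd', hC'⟩; exact hle C d' hk hd' hC'⟩

lemma exists_isLCD_finrank_two_three_mul {i : ℕ} (hodd : Odd i) :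
    ∃ C : Submodule (ZMod 2) (Fin (3 * i) → ZMod 2),
      Module.finrank (ZMod 2) C = 2 ∧ hasMinDist C (2 * i) ∧ isLCD C := by
  set x := indicatorVec (blockSet i ({0, 1} : Finset (Fin 3)))
  set y := indicatorVec (blockSet i ({1, 2} : Finset (Fin 3)))
  have hxx : x ⬝ᵥ x = 0 := by
    rw [indicatorVec_blockSet_dotProduct, ZMod.natCast_eq_zero_iff_even]
    exact even_two_mul i
  have hyy : y ⬝ᵥ y = 0 := by
    rw [indicatorVec_blockSet_dotProduct, ZMod.natCast_eq_zero_iff_even]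
    exact even_two_mul i
  have hxy : x ⬝ᵥ y = 1 := by
    rw [indicatorVec_blockSet_dotProduct, ZMod.natCast_eq_one_iff_odd]
    simpa using hodd
  have hx0 : x ≠ 0 := by
    intro hx
    simp [hx] at hxy
  have hsum : x + y = indicatorVec (blockSet i ({0, 2} : Finset (Fin 3))) := by
    rw [indicatorVec_add_indicatorVec, ← blockSet_symmDiff]
    rfl
  refine ⟨_, finrank_span_pair_of_gram hxx hyy hxy, ?_, isLCD_span_pair_of_gram hxx hyy hxy⟩
  refine hasMinDist_span_pair hx0 ?_ ?_ ?_ <;>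
    simp [x, y, hsum, hammingNorm_indicatorVec, card_blockSet]

theorem lcd_3i_odd_general (i : ℕ) (hodd : Odd i) :
    (∃ C : Submodule (ZMod 2) (Fin (3 * i) → ZMod 2),
      Module.finrank (ZMod 2) ↥C = 2 ∧ hasMinDist C (2 * i) ∧ isLCD C) ∧
    LCDmax (3 * i) 2 = 2 * (3 * i) / 3 := by
  have hC := exists_isLCD_finrank_two_three_mul hodd
  refine ⟨hC, ?_⟩
  rw [show 2 * (3 * i) / 3 = 2 * i by omega]
  refine LCDmax_eq_of_exists_of_forall_le hC fun C d hk hd _ => ?_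
  have := three_mul_le_two_mul_of_finrank_eq_two hk hd
  omega

/-- For every positive odd integer `i` there is a binary `[3i, 2, 2i]` LCD code;
hence `LCD[3i, 2] = ⌊2(3i)/3⌋` for odd `i`. -/
theorem lcd_3i_odd (i : ℕ) (hi : 1 ≤ i) (hodd : Odd i) :
    (∃ C : Submodule (ZMod 2) (Fin (3 * i) → ZMod 2),
      Module.finrank (ZMod 2) ↥C = 2 ∧ hasMinDist C (2 * i) ∧ isLCD C) ∧
    LCDmax (3 * i) 2 = 2 * (3 * i) / 3 :=
  lcd_3i_odd_general i hodd
end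

section
/- For every positive even integer i, there is no binary [3i, 2, 2i] LCD code, but there exists a binary [3i, 2, 2i−1] LCD code; hence LCD[3i,2] = 2i − 1 for i even. -/
open Matrix

/-!
In a binary `[3i, 2]` code of minimum distance at least `2i` the three nonzero codewords have
weights summing to at most `2 · 3i`, so each has weight exactly `2i` and any two distinct ones
share exactly `i` ones. For even `i` every overlap is even, so the code is self-orthogonal and
therefore not LCD.

Conversely, `u = 1^{2i} 0^i` and `v = 0^{i+1} 1^{2i-1}` have weights `2i`, `2i - 1`, overlap
`i - 1`, and hence Gram matrix `[[0, 1], [1, 1]]` over `𝔽₂`, which is invertible; so they span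
a two-dimensional LCD code whose nonzero weights are `2i`, `2i - 1` and `2i + 1`.
-/

open Finset Module Submodule

section BinaryWeight

variable {n : ℕ}

theorem hammingNorm_eq_sum_val (x : Fin n → ZMod 2) : hammingNorm x = ∑ j, (x j).val := by
  rw [hammingNorm, card_filter]
  exact sum_congr rfl fun j _ =>
    (by decide : ∀ a : ZMod 2, (if a ≠ 0 then 1 else 0) = a.val) (x j)

theorem sum_eq_hammingNorm (x : Fin n → ZMod 2) : ∑ j, x j = (hammingNorm x : ZMod 2) := by
  simp [hammingNorm_eq_sum_val]

theorem dotProduct_eq_hammingNorm_mul (u v : Fin n → ZMod 2) :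
    u ⬝ᵥ v = (hammingNorm (u * v) : ZMod 2) :=
  sum_eq_hammingNorm (u * v)

theorem dotProduct_self_eq_hammingNorm (u : Fin n → ZMod 2) :
    u ⬝ᵥ u = (hammingNorm u : ZMod 2) := by
  rw [dotProduct_eq_hammingNorm_mul,
    show u * u = u from funext fun j => (by decide : ∀ a : ZMod 2, a * a = a) (u j)]

theorem hammingNorm_add_add_two_mul_hammingNorm_mul (u v : Fin n → ZMod 2) :
    hammingNorm (u + v) + 2 * hammingNorm (u * v) = hammingNorm u + hammingNorm v := by
  simp only [hammingNorm_eq_sum_val, mul_sum, ← sum_add_distrib]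
  exact sum_congr rfl fun j _ =>
    (by decide : ∀ a b : ZMod 2, (a + b).val + 2 * (a * b).val = a.val + b.val) (u j) (v j)

theorem hammingNorm_add_hammingNorm_add_hammingNorm_add_le_s7 (u v : Fin n → ZMod 2) :
    hammingNorm u + hammingNorm v + hammingNorm (u + v) ≤ 2 * n := by
  simp only [hammingNorm_eq_sum_val, ← sum_add_distrib]
  calc _ ≤ ∑ _j : Fin n, 2 := sum_le_sum fun j _ =>
          (by decide : ∀ a b : ZMod 2, a.val + b.val + (a + b).val ≤ 2) (u j) (v j)
    _ = 2 * n := by simp [mul_comm]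

end BinaryWeight

theorem Submodule.exists_mem_notMem_span_singleton {K V : Type*} [Field K] [AddCommGroup V]
    [Module K V] {C : Submodule K V} (hC : 2 ≤ finrank K C) (c : V) :
    ∃ c' ∈ C, c' ∉ K ∙ c := by
  by_contra! h
  have := (Submodule.finrank_mono h).trans (finrank_span_le_card ({c} : Set V))
  simp only [Set.toFinset_singleton, card_singleton] at this
  omega

theorem not_isLCD_of_le_dualCode {n : ℕ} {C : Submodule (ZMod 2) (Fin n → ZMod 2)} (hC : C ≠ ⊥)
    (hdual : C ≤ dualCode C) : ¬ isLCD C := by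
  rw [isLCD, inf_eq_left.2 hdual]
  exact hC

section UpperBound

variable {i : ℕ} {C : Submodule (ZMod 2) (Fin (3 * i) → ZMod 2)}

theorem hammingNorm_eq_of_two_le_finrank (hC : 2 ≤ finrank (ZMod 2) C)
    (hd : ∀ v ∈ C, v ≠ 0 → 2 * i ≤ hammingNorm v) {c : Fin (3 * i) → ZMod 2} (hc : c ∈ C)
    (hc0 : c ≠ 0) : hammingNorm c = 2 * i := by
  obtain ⟨c', hc', hspan⟩ := exists_mem_notMem_span_singleton hC c
  have hc'0 : c' ≠ 0 := fun h => hspan (h ▸ zero_mem _)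
  have hsum0 : c + c' ≠ 0 := fun h => hspan <| by
    rw [← neg_eq_of_add_eq_zero_right h]
    exact neg_mem (mem_span_singleton_self c)
  have := hammingNorm_add_hammingNorm_add_hammingNorm_add_le_s7 c c'
  have := hd c hc hc0
  have := hd c' hc' hc'0
  have := hd _ (add_mem hc hc') hsum0
  omega

theorem le_dualCode_of_two_le_finrank (heven : Even i) (hC : 2 ≤ finrank (ZMod 2) C)
    (hd : ∀ v ∈ C, v ≠ 0 → 2 * i ≤ hammingNorm v) : C ≤ dualCode C := by
  intro c hc c' hc'
  rw [dotProduct_eq_hammingNorm_mul, ZMod.natCast_eq_zero_iff_even]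
  rcases eq_or_ne c 0 with rfl | hc0
  · simp
  rcases eq_or_ne c' 0 with rfl | hc'0
  · simp
  have hoverlap := hammingNorm_add_add_two_mul_hammingNorm_mul c c'
  rw [hammingNorm_eq_of_two_le_finrank hC hd hc hc0,
    hammingNorm_eq_of_two_le_finrank hC hd hc' hc'0] at hoverlap
  rcases eq_or_ne (c + c') 0 with hsum | hsum
  · rw [hsum, hammingNorm_zero] at hoverlap
    rw [show hammingNorm (c * c') = 2 * i by omega]
    exact even_two_mul i
  · rw [hammingNorm_eq_of_two_le_finrank hC hd (add_mem hc hc') hsum] at hoverlap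
    rwa [show hammingNorm (c * c') = i by omega]

theorem not_isLCD_of_two_le_finrank (heven : Even i) (hC : 2 ≤ finrank (ZMod 2) C)
    (hd : ∀ v ∈ C, v ≠ 0 → 2 * i ≤ hammingNorm v) : ¬ isLCD C := by
  refine not_isLCD_of_le_dualCode ?_ (le_dualCode_of_two_le_finrank heven hC hd)
  rintro rfl
  simp at hC

end UpperBound

section SpanPair

variable {n : ℕ} {u v : Fin n → ZMod 2}

theorem eq_zero_of_orthogonal_of_gram_det_ne_zero
    (hdet : u ⬝ᵥ u * (v ⬝ᵥ v) - (u ⬝ᵥ v) ^ 2 ≠ 0) {a b : ZMod 2}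
    (hu : (a • u + b • v) ⬝ᵥ u = 0) (hv : (a • u + b • v) ⬝ᵥ v = 0) : a = 0 ∧ b = 0 := by
  simp only [add_dotProduct, smul_dotProduct, smul_eq_mul, dotProduct_comm v u] at hu hv
  have ha : a * (u ⬝ᵥ u * (v ⬝ᵥ v) - (u ⬝ᵥ v) ^ 2) = 0 := by
    linear_combination (v ⬝ᵥ v) * hu - (u ⬝ᵥ v) * hv
  have hb : b * (u ⬝ᵥ u * (v ⬝ᵥ v) - (u ⬝ᵥ v) ^ 2) = 0 := by
    linear_combination (u ⬝ᵥ u) * hv - (u ⬝ᵥ v) * hu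
  exact ⟨(mul_eq_zero.1 ha).resolve_right hdet, (mul_eq_zero.1 hb).resolve_right hdet⟩

theorem finrank_span_pair_of_gram_det_ne_zero
    (hdet : u ⬝ᵥ u * (v ⬝ᵥ v) - (u ⬝ᵥ v) ^ 2 ≠ 0) :
    finrank (ZMod 2) (span (ZMod 2) {u, v}) = 2 := by
  have hli : LinearIndependent (ZMod 2) ![u, v] := LinearIndependent.pair_iff.2 fun a b h =>
    eq_zero_of_orthogonal_of_gram_det_ne_zero hdet (by simp [h]) (by simp [h])
  rw [← Matrix.range_cons_cons_empty u v ![], finrank_span_eq_card hli, Fintype.card_fin]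

theorem isLCD_span_pair_of_gram_det_ne_zero (hdet : u ⬝ᵥ u * (v ⬝ᵥ v) - (u ⬝ᵥ v) ^ 2 ≠ 0) :
    isLCD (span (ZMod 2) {u, v}) := by
  refine eq_bot_iff.2 fun x ⟨hxC, hxD⟩ => ?_
  obtain ⟨a, b, rfl⟩ := mem_span_pair.1 hxC
  obtain ⟨rfl, rfl⟩ := eq_zero_of_orthogonal_of_gram_det_ne_zero hdet
    (hxD u (subset_span (by simp))) (hxD v (subset_span (by simp)))
  simp

theorem hasMinDist_span_pair_s7 {d : ℕ} (hd : 0 < d) (hu : d ≤ hammingNorm u)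
    (hv : hammingNorm v = d) (huv : d ≤ hammingNorm (u + v)) :
    hasMinDist (span (ZMod 2) {u, v}) d := by
  refine ⟨fun x hx hx0 => ?_, v, subset_span (by simp), ?_, hv⟩
  · obtain ⟨a, b, rfl⟩ := mem_span_pair.1 hx
    have h01 : ∀ a : ZMod 2, a = 0 ∨ a = 1 := by decide
    rcases h01 a with rfl | rfl <;> rcases h01 b with rfl | rfl <;> simp_all
  · rw [← hammingNorm_pos_iff]
    omega

end SpanPair

def intervalWord (n a b : ℕ) : Fin n → ZMod 2 :=
  fun j => if a ≤ (j : ℕ) ∧ (j : ℕ) < b then 1 else 0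

theorem hammingNorm_intervalWord {n a b : ℕ} (hb : b ≤ n) :
    hammingNorm (intervalWord n a b) = b - a := by
  have : ({j | intervalWord n a b j ≠ 0} : Finset (Fin n)) =
      (Ico a b).attachFin fun m hm => (mem_Ico.1 hm).2.trans_le hb := by
    ext j
    simp [intervalWord]
  rw [hammingNorm, this, card_attachFin, Nat.card_Ico]

theorem intervalWord_mul_intervalWord (n a b c d : ℕ) :
    intervalWord n a b * intervalWord n c d = intervalWord n (max a c) (min b d) := by
  ext j
  simp only [intervalWord, Pi.mul_apply, mul_ite, mul_one, mul_zero, max_le_iff, lt_min_iff]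
  split_ifs <;> first | rfl | omega

theorem exists_isLCD_finrank_two_hasMinDist (i : ℕ) (hi : 1 ≤ i) (heven : Even i) :
    ∃ C : Submodule (ZMod 2) (Fin (3 * i) → ZMod 2),
      finrank (ZMod 2) C = 2 ∧ hasMinDist C (2 * i - 1) ∧ isLCD C := by
  set u := intervalWord (3 * i) 0 (2 * i)
  set v := intervalWord (3 * i) (i + 1) (3 * i)
  have hu : hammingNorm u = 2 * i := by rw [hammingNorm_intervalWord (by omega)]; omega
  have hv : hammingNorm v = 2 * i - 1 := by rw [hammingNorm_intervalWord le_rfl]; omega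
  have huv : hammingNorm (u * v) = i - 1 := by
    rw [intervalWord_mul_intervalWord, hammingNorm_intervalWord (by omega)]; omega
  have hu_add_v := hammingNorm_add_add_two_mul_hammingNorm_mul u v
  have hdet : u ⬝ᵥ u * (v ⬝ᵥ v) - (u ⬝ᵥ v) ^ 2 ≠ 0 := by
    obtain ⟨k, rfl⟩ := heven
    rw [dotProduct_self_eq_hammingNorm, dotProduct_self_eq_hammingNorm, hu, hv,
      dotProduct_eq_hammingNorm_mul, huv, ZMod.natCast_eq_zero_iff_even.2 ⟨k + k, by ring⟩,
      ZMod.natCast_eq_one_iff_odd.2 ⟨2 * k - 1, by omega⟩,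
      ZMod.natCast_eq_one_iff_odd.2 ⟨k - 1, by omega⟩]
    decide
  exact ⟨_, finrank_span_pair_of_gram_det_ne_zero hdet,
    hasMinDist_span_pair_s7 (by omega) (by omega) hv (by omega),
    isLCD_span_pair_of_gram_det_ne_zero hdet⟩

/-- For every positive even integer `i`, there is no binary `[3i, 2, 2i]` LCD code, but there
is a binary `[3i, 2, 2i−1]` LCD code; hence `LCD[3i, 2] = 2i − 1` for even `i`. -/
theorem lcd_3i_even (i : ℕ) (hi : 1 ≤ i) (heven : Even i) :
    (¬ ∃ C : Submodule (ZMod 2) (Fin (3 * i) → ZMod 2),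
      Module.finrank (ZMod 2) ↥C = 2 ∧ hasMinDist C (2 * i) ∧ isLCD C) ∧
    (∃ C : Submodule (ZMod 2) (Fin (3 * i) → ZMod 2),
      Module.finrank (ZMod 2) ↥C = 2 ∧ hasMinDist C (2 * i - 1) ∧ isLCD C) ∧
    LCDmax (3 * i) 2 = 2 * i - 1 := by
  have hlt : ∀ (d : ℕ) (C : Submodule (ZMod 2) (Fin (3 * i) → ZMod 2)),
      finrank (ZMod 2) C = 2 → hasMinDist C d → isLCD C → d < 2 * i := by
    intro d C hrank hmin hlcd
    by_contra! hd
    exact not_isLCD_of_two_le_finrank heven hrank.ge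
      (fun v hv hv0 => hd.trans (hmin.1 v hv hv0)) hlcd
  have hexists := exists_isLCD_finrank_two_hasMinDist i hi heven
  refine ⟨fun ⟨C, hrank, hmin, hlcd⟩ => lt_irrefl _ (hlt _ C hrank hmin hlcd), hexists, ?_⟩
  exact IsGreatest.csSup_eq ⟨hexists, fun d ⟨C, hrank, hmin, hlcd⟩ =>
    Nat.le_sub_one_of_lt (hlt d C hrank hmin hlcd)⟩
end

section
/- If k ≥ 4 is even, then every binary [n,k] LCD code contains an [n, k−2] LCD subcode; consequently LCD[n,k] ≤ LCD[n,k−2] for any n ≥ k. -/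
/-!
Over GF(2) one has `v ⬝ᵥ v = 1 ⬝ᵥ v`, so the self-orthogonal words of an `[n,k]` code `C` form a
subspace of codimension at most one; for `k ≥ 2` it contains some `v ≠ 0`, and as `C` is LCD some
`w ∈ C` has `v ⬝ᵥ w = 1`. The Gram matrix `[[0, 1], [1, w ⬝ᵥ w]]` of `v, w` is invertible, so the
words of `C` orthogonal to `v` and `w` form a subcode `D` of dimension `k - 2` with
`C = D ⊕ ⟨v, w⟩`; a word of `D` orthogonal to `D` is then orthogonal to all of `C`, hence zero.
The minimum distance of a subcode is at least that of the code, which gives the bound on `LCDmax`.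
-/

open Matrix

open Module

lemma Submodule.finrank_inf_ker_add_finrank_map {K V W : Type*} [Field K] [AddCommGroup V]
    [Module K V] [AddCommGroup W] [Module K W] [FiniteDimensional K V]
    (p : Submodule K V) (f : V →ₗ[K] W) :
    finrank K ↥(p ⊓ LinearMap.ker f) + finrank K ↥(p.map f) = finrank K p := by
  rw [← (f.domRestrict p).finrank_range_add_finrank_ker, LinearMap.range_domRestrict,
    LinearMap.ker_domRestrict, ← Submodule.map_comap_subtype, Submodule.finrank_map_subtype_eq,
    add_comm]

section DotProductPair

variable {K ι : Type*} [CommRing K] [Fintype ι]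

def dotProductPair (v w : ι → K) : (ι → K) →ₗ[K] K × K :=
  (dotProductBilin (A := K) K K v).prod (dotProductBilin (A := K) K K w)

@[simp]
lemma dotProductPair_apply (v w x : ι → K) : dotProductPair v w x = (v ⬝ᵥ x, w ⬝ᵥ x) := rfl

variable {v w : ι → K}

-- `w - (w ⬝ᵥ w) • v` and `v` form the basis dual to `v, w`.
lemma dotProductPair_dualCombination (hvv : v ⬝ᵥ v = 0) (hvw : v ⬝ᵥ w = 1) (a b : K) :
    dotProductPair v w (a • (w - (w ⬝ᵥ w) • v) + b • v) = (a, b) := by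
  have hwv : w ⬝ᵥ v = 1 := dotProduct_comm w v ▸ hvw
  simp only [dotProductPair_apply, dotProduct_add, dotProduct_smul, dotProduct_sub, hvv, hvw, hwv,
    smul_eq_mul]
  ext <;> ring

lemma map_dotProductPair_eq_top {C : Submodule K (ι → K)} (hv : v ∈ C) (hw : w ∈ C)
    (hvv : v ⬝ᵥ v = 0) (hvw : v ⬝ᵥ w = 1) : C.map (dotProductPair v w) = ⊤ :=
  Submodule.eq_top_iff'.2 fun ⟨a, b⟩ =>
    ⟨_, C.add_mem (C.smul_mem a (C.sub_mem hw (C.smul_mem _ hv))) (C.smul_mem b hv),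
      dotProductPair_dualCombination hvv hvw a b⟩

end DotProductPair

lemma finrank_inf_ker_dotProductPair {K ι : Type*} [Field K] [Fintype ι]
    {C : Submodule K (ι → K)} {v w : ι → K} (hv : v ∈ C) (hw : w ∈ C)
    (hvv : v ⬝ᵥ v = 0) (hvw : v ⬝ᵥ w = 1) :
    finrank K ↥(C ⊓ LinearMap.ker (dotProductPair v w)) = finrank K C - 2 := by
  have := C.finrank_inf_ker_add_finrank_map (dotProductPair v w)
  rw [map_dotProductPair_eq_top hv hw hvv hvw, finrank_top, finrank_prod, finrank_self] at this
  omega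

lemma dotProduct_self_eq_one_dotProduct {ι : Type*} [Fintype ι] (v : ι → ZMod 2) :
    v ⬝ᵥ v = 1 ⬝ᵥ v := by
  simp only [dotProduct, Pi.one_apply, one_mul]
  exact Finset.sum_congr rfl fun i _ => (by decide : ∀ x : ZMod 2, x * x = x) (v i)

lemma exists_ne_zero_dotProduct_self_eq_zero {ι : Type*} [Fintype ι]
    {C : Submodule (ZMod 2) (ι → ZMod 2)} (hC : 2 ≤ finrank (ZMod 2) C) :
    ∃ v ∈ C, v ≠ 0 ∧ v ⬝ᵥ v = 0 := by
  set φ := dotProductBilin (A := ZMod 2) (ZMod 2) (ZMod 2) (1 : ι → ZMod 2)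
  have hrank := C.finrank_inf_ker_add_finrank_map φ
  have hmap : finrank (ZMod 2) ↥(C.map φ) ≤ 1 := (Submodule.finrank_le _).trans (finrank_self _).le
  obtain ⟨v, ⟨hvC, hvφ⟩, hv0⟩ :=
    Submodule.exists_mem_ne_zero_of_ne_bot
      ((Submodule.one_le_finrank_iff (S := C ⊓ LinearMap.ker φ)).mp (by omega))
  exact ⟨v, hvC, hv0, (dotProduct_self_eq_one_dotProduct v).trans hvφ⟩

section LCD

variable {n : ℕ} {C : Submodule (ZMod 2) (Fin n → ZMod 2)}

lemma isLCD_iff : isLCD C ↔ ∀ v ∈ C, (∀ c ∈ C, v ⬝ᵥ c = 0) → v = 0 := by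
  simp only [isLCD, Submodule.eq_bot_iff, Submodule.mem_inf]
  exact ⟨fun h v hv hdual => h v ⟨hv, hdual⟩, fun h v hv => h v hv.1 hv.2⟩

lemma isLCD.exists_dotProduct_eq_one (hC : isLCD C) {v : Fin n → ZMod 2} (hv : v ∈ C)
    (hv0 : v ≠ 0) : ∃ w ∈ C, v ⬝ᵥ w = 1 := by
  by_contra! h
  exact hv0 (isLCD_iff.1 hC v hv fun c hc => (by decide : ∀ x : ZMod 2, x ≠ 1 → x = 0) _ (h c hc))

lemma isLCD_inf_ker_dotProductPair (hC : isLCD C) {v w : Fin n → ZMod 2} (hv : v ∈ C)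
    (hw : w ∈ C) (hvv : v ⬝ᵥ v = 0) (hvw : v ⬝ᵥ w = 1) :
    isLCD (C ⊓ LinearMap.ker (dotProductPair v w)) := by
  rw [isLCD_iff] at hC ⊢
  intro d hd hdual
  obtain ⟨hdC, hdker⟩ := Submodule.mem_inf.1 hd
  refine hC d hdC fun c hc => ?_
  set s := (v ⬝ᵥ c) • (w - (w ⬝ᵥ w) • v) + (w ⬝ᵥ c) • v
  have hsC : s ∈ C := C.add_mem (C.smul_mem _ (C.sub_mem hw (C.smul_mem _ hv))) (C.smul_mem _ hv)
  have hcs : c - s ∈ C ⊓ LinearMap.ker (dotProductPair v w) := by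
    refine Submodule.mem_inf.2 ⟨C.sub_mem hc hsC, ?_⟩
    rw [LinearMap.mem_ker, map_sub, dotProductPair_dualCombination hvv hvw, dotProductPair_apply,
      sub_self]
  have hdv : d ⬝ᵥ v = 0 := by rw [dotProduct_comm]; exact congrArg Prod.fst hdker
  have hdw : d ⬝ᵥ w = 0 := by rw [dotProduct_comm]; exact congrArg Prod.snd hdker
  calc d ⬝ᵥ c = d ⬝ᵥ (c - s) + d ⬝ᵥ s := by rw [dotProduct_sub, sub_add_cancel]
    _ = 0 := by simp [hdual _ hcs, s, dotProduct_add, dotProduct_smul, dotProduct_sub, hdv, hdw]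

theorem isLCD.exists_subcode (hC : isLCD C) (hk : 2 ≤ finrank (ZMod 2) C) :
    ∃ D : Submodule (ZMod 2) (Fin n → ZMod 2),
      D ≤ C ∧ finrank (ZMod 2) D = finrank (ZMod 2) C - 2 ∧ isLCD D := by
  obtain ⟨v, hv, hv0, hvv⟩ := exists_ne_zero_dotProduct_self_eq_zero hk
  obtain ⟨w, hw, hvw⟩ := hC.exists_dotProduct_eq_one hv hv0
  exact ⟨_, inf_le_left, finrank_inf_ker_dotProductPair hv hw hvv hvw,
    isLCD_inf_ker_dotProductPair hC hv hw hvv hvw⟩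

end LCD

section MinDist

variable {n : ℕ} {C D : Submodule (ZMod 2) (Fin n → ZMod 2)} {d d' : ℕ}

lemma hasMinDist.le_card (h : hasMinDist C d) : d ≤ n := by
  obtain ⟨v, -, -, rfl⟩ := h.2
  simpa using hammingNorm_le_card_fintype (x := v)

lemma hasMinDist.le_of_subcode (hC : hasMinDist C d) (hD : hasMinDist D d') (hDC : D ≤ C) :
    d ≤ d' := by
  obtain ⟨v, hv, hv0, rfl⟩ := hD.2
  exact hC.1 v (hDC hv) hv0

lemma exists_hasMinDist (hC : C ≠ ⊥) : ∃ d, hasMinDist C d := by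
  obtain ⟨x, hx, hx0⟩ := Submodule.exists_mem_ne_zero_of_ne_bot hC
  set weights := {m | ∃ y ∈ C, y ≠ 0 ∧ hammingNorm y = m}
  obtain ⟨y, hy, hy0, hyw⟩ := Nat.sInf_mem (s := weights) ⟨_, x, hx, hx0, rfl⟩
  exact ⟨sInf weights, fun z hz hz0 => Nat.sInf_le ⟨z, hz, hz0, rfl⟩, y, hy, hy0, hyw⟩

end MinDist

lemma LCDmax_le_LCDmax_of_exists_subcode {n k k' : ℕ} (hk' : 0 < k')
    (h : ∀ C : Submodule (ZMod 2) (Fin n → ZMod 2), finrank (ZMod 2) C = k → isLCD C →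
      ∃ D : Submodule (ZMod 2) (Fin n → ZMod 2), D ≤ C ∧ finrank (ZMod 2) D = k' ∧ isLCD D) :
    LCDmax n k ≤ LCDmax n k' := by
  refine csSup_le' ?_
  rintro d ⟨C, hCk, hCd, hC⟩
  obtain ⟨D, hDC, hDk, hD⟩ := h C hCk hC
  obtain ⟨d', hDd'⟩ := exists_hasMinDist (Submodule.one_le_finrank_iff.mp (hDk ▸ hk'))
  have hbdd : BddAbove {d | ∃ C : Submodule (ZMod 2) (Fin n → ZMod 2),
      finrank (ZMod 2) C = k' ∧ hasMinDist C d ∧ isLCD C} :=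
    ⟨n, by rintro _ ⟨_, -, hd, -⟩; exact hd.le_card⟩
  exact le_csSup_of_le hbdd ⟨D, hDk, hDd', hD⟩ (hCd.le_of_subcode hDd' hDC)

theorem lcd_subcode_even_general (n k : ℕ) (hk : 4 ≤ k) :
    (∀ C : Submodule (ZMod 2) (Fin n → ZMod 2),
      Module.finrank (ZMod 2) ↥C = k → isLCD C →
      ∃ D : Submodule (ZMod 2) (Fin n → ZMod 2),
        D ≤ C ∧ Module.finrank (ZMod 2) ↥D = k - 2 ∧ isLCD D) ∧
    LCDmax n k ≤ LCDmax n (k - 2) := by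
  have hsub : ∀ C : Submodule (ZMod 2) (Fin n → ZMod 2), finrank (ZMod 2) C = k → isLCD C →
      ∃ D : Submodule (ZMod 2) (Fin n → ZMod 2), D ≤ C ∧ finrank (ZMod 2) D = k - 2 ∧ isLCD D :=
    fun C hCk hC => hCk ▸ hC.exists_subcode (by omega)
  exact ⟨hsub, LCDmax_le_LCDmax_of_exists_subcode (by omega) hsub⟩

/-- If `k ≥ 4` is even, every binary `[n,k]` LCD code contains an `[n, k−2]` LCD subcode;
consequently `LCD[n,k] ≤ LCD[n,k−2]` for any `n ≥ k`. -/
theorem lcd_subcode_even (n k : ℕ) (hk : 4 ≤ k) (heven : Even k) (hn : k ≤ n) :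
    (∀ C : Submodule (ZMod 2) (Fin n → ZMod 2),
      Module.finrank (ZMod 2) ↥C = k → isLCD C →
      ∃ D : Submodule (ZMod 2) (Fin n → ZMod 2),
        D ≤ C ∧ Module.finrank (ZMod 2) ↥D = k - 2 ∧ isLCD D) ∧
    LCDmax n k ≤ LCDmax n (k - 2) :=
  lcd_subcode_even_general n k hk
end

section
/- Let n be odd and i ≥ 0 with n > 6i + 3. Then for every k ≥ 1 there is no binary [n, k, n−2i−1] LCD code. -/
open Matrix

/-! The minimum distance `d = n - 2i - 1` is even. A one-dimensional code is spanned by a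
codeword of weight `d`, which is orthogonal to itself since `v ⬝ᵥ v ≡ wt v (mod 2)`, so the
code is not LCD. A code of dimension at least two contains independent `v`, `w`, and the three
nonzero words `v`, `w`, `v + w` cover every coordinate at most twice, so `3d ≤ 2n` (the
Griesmer bound for `k = 2`), which contradicts `n > 6i + 3`. -/

theorem Submodule.le_span_singleton_iff_finrank_le_one {K V : Type*} [DivisionRing K]
    [AddCommGroup V] [Module K V] [FiniteDimensional K V] {C : Submodule K V} {v : V}
    (hv : v ∈ C) (hv0 : v ≠ 0) : C ≤ K ∙ v ↔ Module.finrank K C ≤ 1 := by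
  constructor
  · intro hle
    simpa [finrank_span_singleton hv0] using Submodule.finrank_mono hle
  · intro hC
    refine (Submodule.eq_of_le_of_finrank_le ((Submodule.span_singleton_le_iff_mem v C).2 hv)
      ?_).ge
    rwa [finrank_span_singleton hv0]

theorem ZMod.dotProduct_self_eq_hammingNorm {ι : Type*} [Fintype ι] (v : ι → ZMod 2) :
    v ⬝ᵥ v = hammingNorm v := by
  rw [hammingNorm, Finset.card_filter, Nat.cast_sum, dotProduct]
  refine Finset.sum_congr rfl fun j _ => ?_
  generalize v j = a
  fin_cases a <;> decide

theorem not_isLCD_of_finrank_le_one {n : ℕ} {C : Submodule (ZMod 2) (Fin n → ZMod 2)}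
    (hC : Module.finrank (ZMod 2) C ≤ 1) {v : Fin n → ZMod 2} (hv : v ∈ C) (hv0 : v ≠ 0)
    (heven : Even (hammingNorm v)) : ¬ isLCD C := by
  intro hlcd
  have hdual : v ∈ dualCode C := fun c hc => by
    obtain ⟨a, rfl⟩ := Submodule.mem_span_singleton.1
      ((Submodule.le_span_singleton_iff_finrank_le_one hv hv0).2 hC hc)
    rw [dotProduct_smul, ZMod.dotProduct_self_eq_hammingNorm,
      (ZMod.natCast_eq_zero_iff_even).2 heven, smul_zero]
  have hmem : v ∈ C ⊓ dualCode C := ⟨hv, hdual⟩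
  rw [hlcd, Submodule.mem_bot] at hmem
  exact hv0 hmem

theorem hammingNorm_add_hammingNorm_add_hammingNorm_add_le_two_mul_card {ι : Type*} [Fintype ι]
    (u v : ι → ZMod 2) :
    hammingNorm u + hammingNorm v + hammingNorm (u + v) ≤ 2 * Fintype.card ι := by
  have hcoord : ∀ a b : ZMod 2,
      (if a ≠ 0 then 1 else 0) + (if b ≠ 0 then 1 else 0)
        + (if a + b ≠ 0 then 1 else 0) ≤ 2 := by
    decide
  simp only [hammingNorm, Finset.card_filter, ← Finset.sum_add_distrib, Pi.add_apply]
  calc _ ≤ ∑ _j : ι, 2 := Finset.sum_le_sum fun j _ => hcoord (u j) (v j)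
    _ = 2 * Fintype.card ι := by simp [mul_comm]

theorem three_mul_le_two_mul_card_of_two_le_finrank {ι : Type*} [Fintype ι]
    {C : Submodule (ZMod 2) (ι → ZMod 2)} (hC : 2 ≤ Module.finrank (ZMod 2) C) {d : ℕ}
    (hd : ∀ v ∈ C, v ≠ 0 → d ≤ hammingNorm v) : 3 * d ≤ 2 * Fintype.card ι := by
  obtain ⟨v, hvC, hv0⟩ := Submodule.exists_mem_ne_zero_of_ne_bot (p := C)
    (by rintro rfl; simp at hC)
  obtain ⟨w, hwC, hwv⟩ : ∃ w ∈ C, w ∉ (ZMod 2) ∙ v :=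
    SetLike.not_le_iff_exists.1 <|
      (Submodule.le_span_singleton_iff_finrank_le_one hvC hv0).not.2 (by omega)
  have hw0 : w ≠ 0 := fun h => hwv (h ▸ Submodule.zero_mem _)
  have hvw0 : v + w ≠ 0 := fun h => hwv <| by
    rw [← neg_eq_of_add_eq_zero_right h]
    exact Submodule.neg_mem _ (Submodule.mem_span_singleton_self v)
  have hcover := hammingNorm_add_hammingNorm_add_hammingNorm_add_le_two_mul_card v w
  have hv := hd v hvC hv0
  have hw := hd w hwC hw0
  have hvw := hd (v + w) (C.add_mem hvC hwC) hvw0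
  omega

theorem no_lcd_odd_n_general (n i k : ℕ) (hn : Odd n) (hni : 6 * i + 3 < n) :
    ¬ ∃ C : Submodule (ZMod 2) (Fin n → ZMod 2),
      Module.finrank (ZMod 2) ↥C = k ∧ hasMinDist C (n - 2 * i - 1) ∧ isLCD C := by
  rintro ⟨C, rfl, ⟨hd, v, hvC, hv0, hvd⟩, hlcd⟩
  rcases le_or_gt (Module.finrank (ZMod 2) C) 1 with hC | hC
  · refine not_isLCD_of_finrank_le_one hC hvC hv0 ?_ hlcd
    rw [hvd]
    obtain ⟨m, rfl⟩ := hn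
    exact ⟨m - i, by omega⟩
  · have hgriesmer := three_mul_le_two_mul_card_of_two_le_finrank hC hd
    rw [Fintype.card_fin] at hgriesmer
    omega

/-- Let `n` be odd and `i ≥ 0` with `n > 6i + 3`. Then for every `k ≥ 1` there is no binary
`[n, k, n−2i−1]` LCD code. -/
theorem no_lcd_odd_n (n i k : ℕ) (hn : Odd n) (hni : 6 * i + 3 < n) (hk : 1 ≤ k) :
    ¬ ∃ C : Submodule (ZMod 2) (Fin n → ZMod 2),
      Module.finrank (ZMod 2) ↥C = k ∧ hasMinDist C (n - 2 * i - 1) ∧ isLCD C :=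
  no_lcd_odd_n_general n i k hn hni
end
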